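/- arXiv:2207.09544 — 2 statements merged into one kernel-verified Lean document; each statement's English description precedes it below -/
import Mathlib

section
/- Let E be a real inner product space, X ⊆ E a nonempty convex set, d : E → ℝ a convex Fréchet-differentiable function with Bregman divergence V(y,x) := d(y) − d(x) − ⟨∇d(x), y − x⟩, μ > 0, δ ≥ 0, and g : E → E a μ-relatively strongly monotone operator on X with z* ∈ X a solution of the Minty variational inequality. Let (z_k)_{k≥0}, (w_k)_{k≥0} in X and positive reals (L_k)_{k≥1} satisfy, for every k ≥ 0: (i) w_k minimizes y ↦ ⟨(1/L_{k+1})·g(z_k), y⟩ + V(y, z_k) over X; (ii) z_{k+1} minimizes u ↦ ⟨(1/L_{k+1})·g(w_k), u⟩ + V(u, z_k) + (μ/L_{k+1})·V(u, w_k) over X; (iii) ⟨g(z_k) − g(w_k), z_{k+1} − w_k⟩ ≤ L_{k+1}·( V(w_k, z_k) + V(z_{k+1}, w_k) ) + δ. Then for every k ≥ 0: V(z*, z_{k+1}) ≤ (∏_{i=1}^{k+1} (1 + μ/L_i)^{−1})·V(z*, z_0) + δ/(L_{k+1} + μ) + Σ_{j=1}^{k} ( δ/(L_j + μ) )·∏_{i=j+1}^{k+1}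 (1 + μ/L_i)^{−1}. -/
/-!
Write `V` for the Bregman divergence of `d`. If `x` minimises `⟪p, ·⟫ + V · z + c V · w` over
`X`, first-order optimality and the three-point identity
`V u z - V x z - V u x = ⟪∇d x - ∇d z, u - x⟫` give, for every `u ∈ X`,
`⟪p, x - u⟫ + V x z + c V x w + (1 + c) V u x ≤ V u z + c V u w`.
Apply this to step (ii) at `u = z*` and to step (i) at `u = z (k + 1)`, bound the remaining cross
term by the line-search condition (iii), and absorb `μ V z* (w k)` using
`μ V z* p ≤ ⟪g p, p - z*⟫`, a consequence of the Minty property and strong monotonicity.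
What is left is `(1 + μ / L (k + 1)) V z* (z (k + 1)) ≤ V z* (z k) + δ / L (k + 1)`, and
unrolling this recursion gives the estimate.
-/

open scoped RealInnerProductSpace
open Finset InnerProductSpace Filter Topology

theorem le_prod_mul_add_sum_of_le_mul_add {R : Type*} [CommSemiring R] [PartialOrder R]
    [IsOrderedRing R] {a b q : ℕ → R} (hq : ∀ i ≥ 1, 0 ≤ q i)
    (h : ∀ k, a (k + 1) ≤ q (k + 1) * a k + b (k + 1)) (k : ℕ) :
    a (k + 1) ≤ (∏ i ∈ Icc 1 (k + 1), q i) * a 0 + b (k + 1) +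
      ∑ j ∈ Icc 1 k, b j * ∏ i ∈ Icc (j + 1) (k + 1), q i := by
  induction k with
  | zero => simpa using h 0
  | succ k ih =>
    have hprod : ∀ j ≤ k + 1, ∏ i ∈ Icc (j + 1) (k + 2), q i =
        (∏ i ∈ Icc (j + 1) (k + 1), q i) * q (k + 2) := fun j hj =>
      prod_Icc_succ_top (by omega) q
    have hsum : ∑ j ∈ Icc 1 k, b j * ∏ i ∈ Icc (j + 1) (k + 2), q i =
        (∑ j ∈ Icc 1 k, b j * ∏ i ∈ Icc (j + 1) (k + 1), q i) * q (k + 2) := by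
      rw [sum_mul]
      refine sum_congr rfl fun j hj => ?_
      rw [hprod j (by grind), mul_assoc]
    calc a (k + 2) ≤ q (k + 2) * a (k + 1) + b (k + 2) := h (k + 1)
      _ ≤ q (k + 2) * ((∏ i ∈ Icc 1 (k + 1), q i) * a 0 + b (k + 1) +
            ∑ j ∈ Icc 1 k, b j * ∏ i ∈ Icc (j + 1) (k + 1), q i) + b (k + 2) := by
        gcongr
        exact hq _ (by omega)
      _ = _ := by
        rw [hprod 0 (by omega), sum_Icc_succ_top (by omega : 1 ≤ k + 1), hsum,
          Finset.Icc_self, prod_singleton]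
        ring

section Bregman

variable {E : Type*} [NormedAddCommGroup E] [InnerProductSpace ℝ E]

theorem IsMinOn.hasFDerivAt_sub_nonneg {f : E → ℝ} {f' : StrongDual ℝ E} {s : Set E} {x y : E}
    (hmin : IsMinOn f s x) (hf : HasFDerivAt f f' x) (hs : Convex ℝ s) (hx : x ∈ s)
    (hy : y ∈ s) : 0 ≤ f' (y - x) :=
  hmin.localize.hasFDerivWithinAt_nonneg hf.hasFDerivWithinAt
    (sub_mem_posTangentConeAt_of_segment_subset (hs.segment_subset hx hy))

theorem ConvexOn.inner_gradient_sub_le [CompleteSpace E] {f : E → ℝ} {f' x : E}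
    (hf : ConvexOn ℝ Set.univ f) (hf' : HasGradientAt f f' x) (y : E) :
    ⟪f', y - x⟫ ≤ f y - f x := by
  have hline : HasDerivAt (f ∘ AffineMap.lineMap x y) ⟪f', y - x⟫ (0 : ℝ) := by
    simpa using hf'.hasFDerivAt.comp_hasDerivAt_of_eq (0 : ℝ)
      (AffineMap.hasDerivAt_lineMap (a := x) (b := y)) (by simp)
  simpa [slope_def_field] using (hf.comp_affineMap _).le_slope_of_hasDerivAt
    (Set.mem_univ 0) (Set.mem_univ 1) zero_lt_one hline

def bregmanDiv (d : E → ℝ) (Dd : E → E) (y x : E) : ℝ := d y - d x - ⟪Dd x, y - x⟫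

variable {d : E → ℝ} {Dd : E → E}

theorem bregmanDiv_three_point (u x z : E) :
    bregmanDiv d Dd u z - bregmanDiv d Dd x z - bregmanDiv d Dd u x = ⟪Dd x - Dd z, u - x⟫ := by
  simp only [bregmanDiv, inner_sub_left, inner_sub_right]
  ring

variable [CompleteSpace E] (hd : ∀ x, HasGradientAt d (Dd x) x)
include hd

theorem bregmanDiv_nonneg (hconv : ConvexOn ℝ Set.univ d) (y x : E) :
    0 ≤ bregmanDiv d Dd y x :=
  sub_nonneg.2 (hconv.inner_gradient_sub_le (hd x) y)

theorem continuous_bregmanDiv_left (x : E) : Continuous fun y => bregmanDiv d Dd y x := by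
  have hdc : Continuous d := continuous_iff_continuousAt.2 fun y => (hd y).continuousAt
  unfold bregmanDiv
  fun_prop

theorem hasGradientAt_bregmanDiv_left (x y : E) :
    HasGradientAt (fun u => bregmanDiv d Dd u x) (Dd y - Dd x) y := by
  rw [hasGradientAt_iff_hasFDerivAt]
  have h := (((hd y).hasFDerivAt.sub_const (d x)).sub
    ((toDual ℝ E (Dd x)).hasFDerivAt.sub_const ⟪Dd x, x⟫))
  simpa [bregmanDiv, inner_sub_right, Pi.sub_def] using h

theorem bregmanDiv_prox_le {X : Set E} (hX : Convex ℝ X) {p x z w : E} {c : ℝ} (hx : x ∈ X)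
    (hmin : IsMinOn (fun u => ⟪p, u⟫ + bregmanDiv d Dd u z + c * bregmanDiv d Dd u w) X x)
    {u : E} (hu : u ∈ X) :
    ⟪p, x - u⟫ + bregmanDiv d Dd x z + c * bregmanDiv d Dd x w +
        (1 + c) * bregmanDiv d Dd u x ≤ bregmanDiv d Dd u z + c * bregmanDiv d Dd u w := by
  have hderiv := (((toDual ℝ E p).hasFDerivAt.add
    (hasGradientAt_bregmanDiv_left hd z x).hasFDerivAt).add
    ((hasGradientAt_bregmanDiv_left hd w x).hasFDerivAt.const_mul c))
  have hfirst := hmin.hasFDerivAt_sub_nonneg hderiv hX hx hu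
  simp only [add_apply, smul_apply, toDual_apply_apply, smul_eq_mul] at hfirst
  rw [← bregmanDiv_three_point u x z, ← bregmanDiv_three_point u x w,
    inner_sub_right] at hfirst
  rw [inner_sub_right]
  linear_combination hfirst

theorem mul_bregmanDiv_le_inner_of_minty (hconv : ConvexOn ℝ Set.univ d) {X : Set E}
    (hX : Convex ℝ X) {g : E → E} {μ : ℝ} (hμ : 0 ≤ μ)
    (hmono : ∀ x ∈ X, ∀ y ∈ X,
      μ * (bregmanDiv d Dd y x + bregmanDiv d Dd x y) ≤ ⟪g y - g x, y - x⟫)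
    {zs : E} (hzs : zs ∈ X) (hMinty : ∀ x ∈ X, ⟪g x, zs - x⟫ ≤ 0) {p : E} (hp : p ∈ X) :
    μ * bregmanDiv d Dd zs p ≤ ⟪g p, p - zs⟫ := by
  set xt : ℝ → E := fun t => zs + t • (p - zs)
  -- `g` need not be continuous, so the bound is proved at the points `xt t` of the open
  -- segment, where the Minty property applies, and `t → 0` uses continuity of `d` only.
  have hsegment : ∀ t ∈ Set.Ioo (0 : ℝ) 1,
      μ * bregmanDiv d Dd (xt t) p ≤ (1 - t) * ⟪g p, p - zs⟫ := by
    intro t ⟨ht0, ht1⟩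
    have hxt : xt t ∈ X := hX.add_smul_sub_mem hzs hp ⟨ht0.le, ht1.le⟩
    have hMinty_t : 0 ≤ ⟪g (xt t), p - zs⟫ := by
      have h := hMinty _ hxt
      rw [show zs - xt t = (-t) • (p - zs) by simp [xt], real_inner_smul_right] at h
      nlinarith
    have hmono_t := hmono _ hxt p hp
    rw [show p - xt t = (1 - t) • (p - zs) by simp [xt]; module, real_inner_smul_right,
      inner_sub_left] at hmono_t
    nlinarith [mul_nonneg hμ (bregmanDiv_nonneg hd hconv p (xt t)),
      mul_nonneg (sub_nonneg.2 ht1.le) hMinty_t]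
  have hcont : Continuous fun t => μ * bregmanDiv d Dd (xt t) p :=
    continuous_const.mul ((continuous_bregmanDiv_left hd p).comp (by fun_prop))
  refine le_of_tendsto_of_tendsto (b := 𝓝[>] (0 : ℝ))
    ((hcont.tendsto' 0 _ (by simp [xt])).mono_left nhdsWithin_le_nhds)
    (((by fun_prop : Continuous fun t : ℝ => (1 - t) * ⟪g p, p - zs⟫).tendsto' 0 _
      (by simp)).mono_left nhdsWithin_le_nhds) ?_
  filter_upwards [Ioo_mem_nhdsGT zero_lt_one] using hsegment

theorem bregmanDiv_extragradient_step_le (hconv : ConvexOn ℝ Set.univ d) {X : Set E}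
    (hX : Convex ℝ X) {g : E → E} {μ L δ : ℝ} (hμ : 0 ≤ μ) (hL : 0 < L) {zs z w z' : E}
    (hzs : zs ∈ X) (hw : w ∈ X) (hz' : z' ∈ X)
    (hstrong : μ * bregmanDiv d Dd zs w ≤ ⟪g w, w - zs⟫)
    (hwmin : ∀ y ∈ X, (1 / L) * ⟪g z, w⟫ + bregmanDiv d Dd w z ≤
      (1 / L) * ⟪g z, y⟫ + bregmanDiv d Dd y z)
    (hzmin : ∀ u ∈ X,
      (1 / L) * ⟪g w, z'⟫ + bregmanDiv d Dd z' z + (μ / L) * bregmanDiv d Dd z' w ≤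
        (1 / L) * ⟪g w, u⟫ + bregmanDiv d Dd u z + (μ / L) * bregmanDiv d Dd u w)
    (hls : ⟪g z - g w, z' - w⟫ ≤ L * (bregmanDiv d Dd w z + bregmanDiv d Dd z' w) + δ) :
    bregmanDiv d Dd zs z' ≤ (1 + μ / L)⁻¹ * bregmanDiv d Dd zs z + δ / (L + μ) := by
  have hprox_z := bregmanDiv_prox_le hd hX hz' (p := (1 / L) • g w)
    (isMinOn_iff.2 fun u hu => by simpa only [real_inner_smul_left] using hzmin u hu) hzs
  have hprox_w := bregmanDiv_prox_le hd hX hw (p := (1 / L) • g z) (c := 0) (w := z)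
    (isMinOn_iff.2 fun y hy => by
      simpa only [real_inner_smul_left, zero_mul, add_zero] using hwmin y hy) hz'
  have hls' : (1 / L) * ⟪g z - g w, z' - w⟫ ≤
      bregmanDiv d Dd w z + bregmanDiv d Dd z' w + δ / L := by
    calc (1 / L) * ⟪g z - g w, z' - w⟫
        ≤ (1 / L) * (L * (bregmanDiv d Dd w z + bregmanDiv d Dd z' w) + δ) := by gcongr
      _ = _ := by field_simp
  have hnonneg : 0 ≤ (μ / L) * bregmanDiv d Dd z' w :=
    mul_nonneg (by positivity) (bregmanDiv_nonneg hd hconv z' w)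
  have hcontract : (1 + μ / L) * bregmanDiv d Dd zs z' ≤ bregmanDiv d Dd zs z + δ / L := by
    simp only [real_inner_smul_left, inner_sub_left, inner_sub_right]
      at hprox_z hprox_w hls' hstrong ⊢
    linear_combination hprox_z + hprox_w + hls' + (1 / L) * hstrong + hnonneg
  calc bregmanDiv d Dd zs z' ≤ (1 + μ / L)⁻¹ * (bregmanDiv d Dd zs z + δ / L) :=
        (le_inv_mul_iff₀ (by positivity)).2 hcontract
    _ = (1 + μ / L)⁻¹ * bregmanDiv d Dd zs z + δ / (L + μ) := by
        field_simp

end Bregman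

theorem algorithm3_convergence_general
    {E : Type*} [NormedAddCommGroup E] [InnerProductSpace ℝ E] [CompleteSpace E]
    (X : Set E) (hXconv : Convex ℝ X)
    (d : E → ℝ) (hdconv : ConvexOn ℝ Set.univ d)
    (Dd : E → E) (hd : ∀ x, HasGradientAt d (Dd x) x)
    (V : E → E → ℝ) (hV : ∀ y x, V y x = d y - d x - ⟪Dd x, y - x⟫)
    (μ : ℝ) (hμ : 0 < μ) (g : E → E)
    (hmono : ∀ x ∈ X, ∀ y ∈ X, μ * (V y x + V x y) ≤ ⟪g y - g x, y - x⟫)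
    (zs : E) (hzs : zs ∈ X) (hMinty : ∀ x ∈ X, ⟪g x, zs - x⟫ ≤ 0)
    (z w : ℕ → E) (hzX : ∀ k, z k ∈ X) (hwX : ∀ k, w k ∈ X)
    (L : ℕ → ℝ) (hL : ∀ i ≥ 1, 0 < L i)
    (hwmin : ∀ k : ℕ, ∀ y ∈ X,
      (1 / L (k + 1)) * ⟪g (z k), w k⟫ + V (w k) (z k) ≤
        (1 / L (k + 1)) * ⟪g (z k), y⟫ + V y (z k))
    (hzmin : ∀ k : ℕ, ∀ u ∈ X,
      (1 / L (k + 1)) * ⟪g (w k), z (k + 1)⟫ + V (z (k + 1)) (z k) +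
          (μ / L (k + 1)) * V (z (k + 1)) (w k) ≤
        (1 / L (k + 1)) * ⟪g (w k), u⟫ + V u (z k) + (μ / L (k + 1)) * V u (w k))
    (δ : ℝ)
    (hls : ∀ k : ℕ, ⟪g (z k) - g (w k), z (k + 1) - w k⟫ ≤
      L (k + 1) * (V (w k) (z k) + V (z (k + 1)) (w k)) + δ) :
    ∀ k : ℕ, V zs (z (k + 1)) ≤
      (∏ i ∈ Icc 1 (k + 1), (1 + μ / L i)⁻¹) * V zs (z 0) + δ / (L (k + 1) + μ) +
        ∑ j ∈ Icc 1 k, δ / (L j + μ) * ∏ i ∈ Icc (j + 1) (k + 1), (1 + μ / L i)⁻¹ := by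
  obtain rfl : V = bregmanDiv d Dd := funext₂ hV
  have hstep : ∀ k, bregmanDiv d Dd zs (z (k + 1)) ≤
      (1 + μ / L (k + 1))⁻¹ * bregmanDiv d Dd zs (z k) + δ / (L (k + 1) + μ) := fun k =>
    bregmanDiv_extragradient_step_le hd hdconv hXconv hμ.le (hL _ (Nat.le_add_left 1 k))
      hzs (hwX k) (hzX (k + 1))
      (mul_bregmanDiv_le_inner_of_minty hd hdconv hXconv hμ.le hmono hzs hMinty (hwX k))
      (hwmin k) (hzmin k) (hls k)
  exact le_prod_mul_add_sum_of_le_mul_add (a := fun k => bregmanDiv d Dd zs (z k))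
    (b := fun j => δ / (L j + μ)) (q := fun i => (1 + μ / L i)⁻¹)
    (fun i hi => by have := hL i hi; positivity) hstep

/-- Theorem 3: convergence estimate of Algorithm 3 (adaptive first-order method
without restarts, line-search slack δ). -/
theorem algorithm3_convergence
    {E : Type*} [NormedAddCommGroup E] [InnerProductSpace ℝ E] [CompleteSpace E]
    (X : Set E) (hXne : X.Nonempty) (hXconv : Convex ℝ X)
    (d : E → ℝ) (hdconv : ConvexOn ℝ Set.univ d)
    (Dd : E → E) (hd : ∀ x, HasGradientAt d (Dd x) x)
    (V : E → E → ℝ) (hV : ∀ y x, V y x = d y - d x - ⟪Dd x, y - x⟫)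
    (μ : ℝ) (hμ : 0 < μ) (g : E → E)
    (hmono : ∀ x ∈ X, ∀ y ∈ X, μ * (V y x + V x y) ≤ ⟪g y - g x, y - x⟫)
    (zs : E) (hzs : zs ∈ X) (hMinty : ∀ x ∈ X, ⟪g x, zs - x⟫ ≤ 0)
    (z w : ℕ → E) (hzX : ∀ k, z k ∈ X) (hwX : ∀ k, w k ∈ X)
    (L : ℕ → ℝ) (hL : ∀ i ≥ 1, 0 < L i)
    (hwmin : ∀ k : ℕ, ∀ y ∈ X,
      (1 / L (k + 1)) * ⟪g (z k), w k⟫ + V (w k) (z k) ≤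
        (1 / L (k + 1)) * ⟪g (z k), y⟫ + V y (z k))
    (hzmin : ∀ k : ℕ, ∀ u ∈ X,
      (1 / L (k + 1)) * ⟪g (w k), z (k + 1)⟫ + V (z (k + 1)) (z k) +
          (μ / L (k + 1)) * V (z (k + 1)) (w k) ≤
        (1 / L (k + 1)) * ⟪g (w k), u⟫ + V u (z k) + (μ / L (k + 1)) * V u (w k))
    (δ : ℝ) (hδ : 0 ≤ δ)
    (hls : ∀ k : ℕ, ⟪g (z k) - g (w k), z (k + 1) - w k⟫ ≤
      L (k + 1) * (V (w k) (z k) + V (z (k + 1)) (w k)) + δ) :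
    ∀ k : ℕ, V zs (z (k + 1)) ≤
      (∏ i ∈ Icc 1 (k + 1), (1 + μ / L i)⁻¹) * V zs (z 0) + δ / (L (k + 1) + μ) +
        ∑ j ∈ Icc 1 k, δ / (L j + μ) * ∏ i ∈ Icc (j + 1) (k + 1), (1 + μ / L i)⁻¹ :=
  algorithm3_convergence_general X hXconv d hdconv Dd hd V hV μ hμ g hmono zs hzs hMinty z w hzX hwX
    L hL hwmin hzmin δ hls
end

section
/- Let E be a real inner product space, X ⊆ E a nonempty convex set, d : E → ℝ a convex Fréchet-differentiable function with Bregman divergence V(y,x) := d(y) − d(x) − ⟨∇d(x), y − x⟩, μ > 0, L > 0, and g : E → E a μ-relatively strongly monotone operator on X with z* ∈ X a solution of the Minty variational inequality. Let (z_k)_{k≥0}, (w_k)_{k≥0} in X and positive reals (L_k)_{k≥1} with L_i ≤ 2L for all i ≥ 1 satisfy, for every k ≥ 0: (i) w_k minimizes y ↦ ⟨(1/L_{k+1})·g(z_k), y⟩ + V(y, z_k) over X; (ii) z_{k+1} minimizes u ↦ ⟨(1/L_{k+1})·g(w_k), u⟩ + V(u, z_k) + (μ/L_{k+1})·V(u,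 w_k) over X; (iii) ⟨g(z_k) − g(w_k), z_{k+1} − w_k⟩ ≤ L_{k+1}·( V(w_k, z_k) + V(z_{k+1}, w_k) ). Then for every R₀ > 0 with V(z*, z_0) ≤ R₀², every ε with 0 < ε < R₀², and every natural number N ≥ ((2L + μ)/μ)·log₂(R₀²/ε), one has V(z*, z_N) ≤ ε. -/
/-!
Write `V` for the Bregman divergence of `d`. Convexity of `d` makes `V ≥ 0`, and the Minty
condition combined with relative strong monotonicity gives `μ V(z*, y) ≤ ⟪g y, y - z*⟫` on `X`
(test the monotonicity at the points of the segment from `z*` to `y` and let them tend to `z*`).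
The first-order optimality conditions of the two proximal subproblems, rewritten with the
three-point identity for `V`, add up with this bound at `y = w_k` and with condition (iii) to
`(L_{k+1} + μ) V(z*, z_{k+1}) ≤ L_{k+1} V(z*, z_k)`. Since `L_{k+1} ≤ 2L`, the divergence contracts
by the factor `2L / (2L + μ) = 1 - μ / (2L + μ) ≤ exp (-μ / (2L + μ))` at each step, and `N` steps
bring `R₀²` below `ε`.
-/

open scoped RealInnerProductSpace
open Set

section Bregman

variable {E : Type*} [NormedAddCommGroup E] [InnerProductSpace ℝ E]

def bregman (d : E → ℝ) (Dd : E → E) (y x : E) : ℝ := d y - d x - ⟪Dd x, y - x⟫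

def RelStronglyMonotoneOn (μ : ℝ) (V : E → E → ℝ) (g : E → E) (X : Set E) : Prop :=
  ∀ x ∈ X, ∀ y ∈ X, μ * (V y x + V x y) ≤ ⟪g y - g x, y - x⟫

def IsMintySolution (g : E → E) (X : Set E) (zs : E) : Prop :=
  zs ∈ X ∧ ∀ x ∈ X, ⟪g x, zs - x⟫ ≤ 0

theorem bregman_three_point (d : E → ℝ) (Dd : E → E) (u a b : E) :
    ⟪Dd a - Dd b, u - a⟫ = bregman d Dd u b - bregman d Dd u a - bregman d Dd a b := by
  simp only [bregman, inner_sub_left, inner_sub_right]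
  ring

variable [CompleteSpace E]

theorem ConvexOn.inner_le_sub_of_hasGradientAt {s : Set E} {f : E → ℝ} {G x y : E}
    (hf : ConvexOn ℝ s f) (hx : x ∈ s) (hy : y ∈ s) (hG : HasGradientAt f G x) :
    ⟪G, y - x⟫ ≤ f y - f x := by
  let ℓ : ℝ →ᵃ[ℝ] E := AffineMap.lineMap x y
  have hderiv : HasDerivAt (f ∘ ℓ) ⟪G, y - x⟫ 0 := by
    have hG' : HasFDerivAt f (InnerProductSpace.toDual ℝ E G) (ℓ 0) := by
      simpa [ℓ] using hasGradientAt_iff_hasFDerivAt.mp hG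
    simpa using hG'.comp_hasDerivAt (0 : ℝ) AffineMap.hasDerivAt_lineMap
  simpa [ℓ, slope_def_field] using
    (hf.comp_affineMap ℓ).le_slope_of_hasDerivAt (by simpa [ℓ] using hx) (by simpa [ℓ] using hy)
      zero_lt_one hderiv

theorem bregman_nonneg {d : E → ℝ} {Dd : E → E} (hdconv : ConvexOn ℝ univ d) {x : E}
    (hd : HasGradientAt d (Dd x) x) (y : E) : 0 ≤ bregman d Dd y x := by
  have := hdconv.inner_le_sub_of_hasGradientAt (mem_univ x) (mem_univ y) hd
  rw [bregman]
  linarith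

theorem hasGradientAt_bregman {d : E → ℝ} {Dd : E → E} {x : E} (hd : HasGradientAt d (Dd x) x)
    (p : E) : HasGradientAt (fun y ↦ bregman d Dd y p) (Dd x - Dd p) x := by
  have hlin : HasFDerivAt (fun y ↦ ⟪Dd p, y - p⟫) (innerSL ℝ (Dd p)) x :=
    (innerSL ℝ (Dd p)).hasFDerivAt.comp x ((hasFDerivAt_id x).sub_const p)
  rw [hasGradientAt_iff_hasFDerivAt]
  refine (((hasGradientAt_iff_hasFDerivAt.mp hd).sub_const (d p)).sub hlin).congr_fderiv ?_
  ext v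
  simp

theorem IsMintySolution.mul_bregman_le_inner {X : Set E} (hX : Convex ℝ X) {d : E → ℝ}
    {Dd : E → E} (hdconv : ConvexOn ℝ univ d) (hd : ∀ x, HasGradientAt d (Dd x) x) {g : E → E}
    {μ : ℝ} (hμ : 0 ≤ μ) (hmono : RelStronglyMonotoneOn μ (bregman d Dd) g X) {zs y : E}
    (hzs : IsMintySolution g X zs) (hy : y ∈ X) :
    μ * bregman d Dd zs y ≤ ⟪g y, y - zs⟫ := by
  set C := ⟪g y, y - zs⟫
  set S := {t : ℝ | μ * bregman d Dd (zs + t • (y - zs)) y ≤ (1 - t) * C}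
  have hseg : Ioo 0 1 ⊆ S := by
    intro t ht
    have hxt : zs + t • (y - zs) ∈ X := hX.add_smul_sub_mem hzs.1 hy (Ioo_subset_Icc_self ht)
    have hm := hmono _ hxt y hy
    have hg := hzs.2 _ hxt
    rw [show y - (zs + t • (y - zs)) = (1 - t) • (y - zs) by module, real_inner_smul_right,
      inner_sub_left] at hm
    rw [show zs - (zs + t • (y - zs)) = (-t) • (y - zs) by module, real_inner_smul_right] at hg
    have hgt : 0 ≤ ⟪g (zs + t • (y - zs)), y - zs⟫ := by nlinarith [ht.1]
    show μ * bregman d Dd (zs + t • (y - zs)) y ≤ (1 - t) * C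
    nlinarith [bregman_nonneg hdconv (hd (zs + t • (y - zs))) y, ht.2]
  have hdcont : Continuous d :=
    continuous_iff_continuousAt.2 fun x ↦ (hd x).differentiableAt.continuousAt
  have hclosed : IsClosed S := isClosed_le (by unfold bregman; fun_prop) (by fun_prop)
  have h0 : (0 : ℝ) ∈ closure (Ioo (0 : ℝ) 1) := by
    rw [closure_Ioo zero_ne_one]; exact left_mem_Icc.2 zero_le_one
  simpa [S] using closure_minimal hseg hclosed h0

theorem bregman_prox_optimality {X : Set E} (hX : Convex ℝ X) {d : E → ℝ} {Dd : E → E}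
    (hd : ∀ x, HasGradientAt d (Dd x) x) {a p q x u : E} {c m : ℝ}
    (hmin : IsMinOn (fun y ↦ c * ⟪a, y⟫ + bregman d Dd y p + m * bregman d Dd y q) X x)
    (hx : x ∈ X) (hu : u ∈ X) :
    c * ⟪a, x - u⟫ ≤ bregman d Dd u p - bregman d Dd u x - bregman d Dd x p +
      m * (bregman d Dd u q - bregman d Dd u x - bregman d Dd x q) := by
  have hF := (((innerSL ℝ a).hasFDerivAt (x := x)).const_mul c).add
    (hasGradientAt_iff_hasFDerivAt.mp (hasGradientAt_bregman (hd x) p)) |>.add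
    ((hasGradientAt_iff_hasFDerivAt.mp (hasGradientAt_bregman (hd x) q)).const_mul m)
  have h0 := hmin.localize.hasFDerivWithinAt_nonneg hF.hasFDerivWithinAt
    (sub_mem_posTangentConeAt_of_segment_subset (hX.segment_subset hx hu))
  simp only [FunLike.coe_add, FunLike.coe_smul, Pi.add_apply, Pi.smul_apply, innerSL_apply_apply,
    InnerProductSpace.toDual_apply_apply, smul_eq_mul] at h0
  rw [bregman_three_point d, bregman_three_point d] at h0
  rw [← neg_sub u x, inner_neg_right]
  linarith

theorem bregman_step_contraction {X : Set E} (hX : Convex ℝ X) {d : E → ℝ} {Dd : E → E}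
    (hdconv : ConvexOn ℝ univ d) (hd : ∀ x, HasGradientAt d (Dd x) x) {g : E → E} {μ : ℝ}
    (hμ : 0 ≤ μ) (hmono : RelStronglyMonotoneOn μ (bregman d Dd) g X) {zs : E}
    (hzs : IsMintySolution g X zs) {z w z' : E} (hw : w ∈ X) (hz' : z' ∈ X) {L : ℝ} (hL : 0 < L)
    (hwmin : IsMinOn (fun y ↦ 1 / L * ⟪g z, y⟫ + bregman d Dd y z) X w)
    (hzmin : IsMinOn
      (fun u ↦ 1 / L * ⟪g w, u⟫ + bregman d Dd u z + μ / L * bregman d Dd u w) X z')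
    (hls : ⟪g z - g w, z' - w⟫ ≤ L * (bregman d Dd w z + bregman d Dd z' w)) :
    (L + μ) * bregman d Dd zs z' ≤ L * bregman d Dd zs z := by
  have hw_opt := bregman_prox_optimality (m := 0) (q := z) hX hd (by simpa using hwmin) hw hz'
  have hz'_opt := bregman_prox_optimality hX hd hzmin hz' hzs.1
  have hA : ⟪g z, w - z'⟫ ≤
      L * (bregman d Dd z' z - bregman d Dd z' w - bregman d Dd w z) := by
    have := mul_le_mul_of_nonneg_left hw_opt hL.le
    field_simp at this
    linarith
  have hB : ⟪g w, z' - zs⟫ ≤ L * (bregman d Dd zs z - bregman d Dd zs z' - bregman d Dd z' z) +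
      μ * (bregman d Dd zs w - bregman d Dd zs z' - bregman d Dd z' w) := by
    have := mul_le_mul_of_nonneg_left hz'_opt hL.le
    field_simp at this
    linarith
  have hsplit : ⟪g w, w - zs⟫ = ⟪g z - g w, z' - w⟫ + ⟪g z, w - z'⟫ + ⟪g w, z' - zs⟫ := by
    simp only [inner_sub_left, inner_sub_right]
    ring
  linarith [hzs.mul_bregman_le_inner hX hdconv hd hμ hmono hw,
    mul_nonneg hμ (bregman_nonneg hdconv (hd w) z')]

end Bregman

theorem le_div_add_mul_of_add_mul_le {L M μ a b : ℝ} (hμ : 0 ≤ μ) (hL : 0 < L) (hLM : L ≤ M)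
    (hb : 0 ≤ b) (h : (L + μ) * a ≤ L * b) : a ≤ M / (M + μ) * b := by
  rw [div_mul_eq_mul_div, le_div_iff₀ (by linarith)]
  nlinarith [mul_nonneg (mul_nonneg hμ hb) (sub_nonneg.2 hLM)]

theorem div_add_pow_le_inv_of_logb_le {M μ x : ℝ} (hM : 0 ≤ M) (hμ : 0 < μ) (hx : 1 ≤ x)
    {N : ℕ} (hN : (M + μ) / μ * Real.logb 2 x ≤ N) : (M / (M + μ)) ^ N ≤ x⁻¹ := by
  set ρ := μ / (M + μ)
  have hlog : Real.log x ≤ N * ρ := by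
    have hlogb : Real.log x ≤ Real.logb 2 x := by
      rw [Real.logb, le_div_iff₀ (Real.log_pos one_lt_two)]
      nlinarith [Real.log_nonneg hx, Real.log_two_lt_d9]
    calc Real.log x ≤ Real.logb 2 x := hlogb
      _ ≤ N * ρ := by
        rw [div_mul_eq_mul_div, div_le_iff₀ hμ] at hN
        rw [mul_div_assoc', le_div_iff₀ (by positivity)]
        linarith
  have hq : M / (M + μ) = 1 - ρ := by
    rw [eq_sub_iff_add_eq, ← add_div, div_self (by positivity)]
  calc (M / (M + μ)) ^ N ≤ Real.exp (-ρ) ^ N := by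
        gcongr
        rw [hq]
        exact Real.one_sub_le_exp_neg ρ
    _ = Real.exp (-(N * ρ)) := by rw [← Real.exp_nat_mul]; ring_nf
    _ ≤ Real.exp (-Real.log x) := by gcongr
    _ = x⁻¹ := by rw [Real.exp_neg, Real.exp_log (by positivity)]

theorem algorithm4_iteration_complexity_general
    {E : Type*} [NormedAddCommGroup E] [InnerProductSpace ℝ E] [CompleteSpace E]
    (X : Set E) (hXconv : Convex ℝ X)
    (d : E → ℝ) (hdconv : ConvexOn ℝ Set.univ d)
    (Dd : E → E) (hd : ∀ x, HasGradientAt d (Dd x) x)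
    (V : E → E → ℝ) (hV : ∀ y x, V y x = d y - d x - ⟪Dd x, y - x⟫)
    (μ Lb : ℝ) (hμ : 0 < μ) (hLb : 0 < Lb) (g : E → E)
    (hmono : ∀ x ∈ X, ∀ y ∈ X, μ * (V y x + V x y) ≤ ⟪g y - g x, y - x⟫)
    (zs : E) (hzs : zs ∈ X) (hMinty : ∀ x ∈ X, ⟪g x, zs - x⟫ ≤ 0)
    (z w : ℕ → E) (hzX : ∀ k, z k ∈ X) (hwX : ∀ k, w k ∈ X)
    (L : ℕ → ℝ) (hL : ∀ i ≥ 1, 0 < L i) (hLle : ∀ i ≥ 1, L i ≤ 2 * Lb)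
    (hwmin : ∀ k : ℕ, ∀ y ∈ X,
      (1 / L (k + 1)) * ⟪g (z k), w k⟫ + V (w k) (z k) ≤
        (1 / L (k + 1)) * ⟪g (z k), y⟫ + V y (z k))
    (hzmin : ∀ k : ℕ, ∀ u ∈ X,
      (1 / L (k + 1)) * ⟪g (w k), z (k + 1)⟫ + V (z (k + 1)) (z k) +
          (μ / L (k + 1)) * V (z (k + 1)) (w k) ≤
        (1 / L (k + 1)) * ⟪g (w k), u⟫ + V u (z k) + (μ / L (k + 1)) * V u (w k))
    (hls : ∀ k : ℕ, ⟪g (z k) - g (w k), z (k + 1) - w k⟫ ≤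
      L (k + 1) * (V (w k) (z k) + V (z (k + 1)) (w k))) :
    ∀ R₀ > (0 : ℝ), V zs (z 0) ≤ R₀ ^ 2 →
      ∀ ε : ℝ, 0 < ε → ε < R₀ ^ 2 →
        ∀ N : ℕ, (2 * Lb + μ) / μ * Real.logb 2 (R₀ ^ 2 / ε) ≤ (N : ℝ) →
          V zs (z N) ≤ ε := by
  intro R₀ _ hV0 ε hε hεR N hN
  obtain rfl : V = bregman d Dd := funext fun y ↦ funext (hV y)
  have hstep : ∀ k, bregman d Dd zs (z (k + 1)) ≤
      2 * Lb / (2 * Lb + μ) * bregman d Dd zs (z k) := fun k ↦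
    le_div_add_mul_of_add_mul_le hμ.le (hL _ k.succ_pos) (hLle _ k.succ_pos)
      (bregman_nonneg hdconv (hd _) _)
      (bregman_step_contraction hXconv hdconv hd hμ.le hmono ⟨hzs, hMinty⟩ (hwX k) (hzX (k + 1))
        (hL _ k.succ_pos) (isMinOn_iff.2 (hwmin k)) (isMinOn_iff.2 (hzmin k)) (hls k))
  have hrate := div_add_pow_le_inv_of_logb_le (by positivity) hμ ((one_lt_div hε).2 hεR).le hN
  calc bregman d Dd zs (z N) ≤ (2 * Lb / (2 * Lb + μ)) ^ N * bregman d Dd zs (z 0) :=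
        le_geom (u := fun n ↦ bregman d Dd zs (z n)) (by positivity) N fun k _ ↦ hstep k
    _ ≤ (R₀ ^ 2 / ε)⁻¹ * R₀ ^ 2 := mul_le_mul hrate hV0 (bregman_nonneg hdconv (hd _) _)
        (by positivity)
    _ = ε := by field_simp

/-- Iteration-complexity remark after Corollary 1: Algorithm 4 (adaptive constants
bounded by 2L) reaches V(z*, z_N) ≤ ε after N ≥ ((2L+μ)/μ)·log₂(R₀²/ε) iterations. -/
theorem algorithm4_iteration_complexity
    {E : Type*} [NormedAddCommGroup E] [InnerProductSpace ℝ E] [CompleteSpace E]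
    (X : Set E) (hXne : X.Nonempty) (hXconv : Convex ℝ X)
    (d : E → ℝ) (hdconv : ConvexOn ℝ Set.univ d)
    (Dd : E → E) (hd : ∀ x, HasGradientAt d (Dd x) x)
    (V : E → E → ℝ) (hV : ∀ y x, V y x = d y - d x - ⟪Dd x, y - x⟫)
    (μ Lb : ℝ) (hμ : 0 < μ) (hLb : 0 < Lb) (g : E → E)
    (hmono : ∀ x ∈ X, ∀ y ∈ X, μ * (V y x + V x y) ≤ ⟪g y - g x, y - x⟫)
    (zs : E) (hzs : zs ∈ X) (hMinty : ∀ x ∈ X, ⟪g x, zs - x⟫ ≤ 0)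
    (z w : ℕ → E) (hzX : ∀ k, z k ∈ X) (hwX : ∀ k, w k ∈ X)
    (L : ℕ → ℝ) (hL : ∀ i ≥ 1, 0 < L i) (hLle : ∀ i ≥ 1, L i ≤ 2 * Lb)
    (hwmin : ∀ k : ℕ, ∀ y ∈ X,
      (1 / L (k + 1)) * ⟪g (z k), w k⟫ + V (w k) (z k) ≤
        (1 / L (k + 1)) * ⟪g (z k), y⟫ + V y (z k))
    (hzmin : ∀ k : ℕ, ∀ u ∈ X,
      (1 / L (k + 1)) * ⟪g (w k), z (k + 1)⟫ + V (z (k + 1)) (z k) +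
          (μ / L (k + 1)) * V (z (k + 1)) (w k) ≤
        (1 / L (k + 1)) * ⟪g (w k), u⟫ + V u (z k) + (μ / L (k + 1)) * V u (w k))
    (hls : ∀ k : ℕ, ⟪g (z k) - g (w k), z (k + 1) - w k⟫ ≤
      L (k + 1) * (V (w k) (z k) + V (z (k + 1)) (w k))) :
    ∀ R₀ > (0 : ℝ), V zs (z 0) ≤ R₀ ^ 2 →
      ∀ ε : ℝ, 0 < ε → ε < R₀ ^ 2 →
        ∀ N : ℕ, (2 * Lb + μ) / μ * Real.logb 2 (R₀ ^ 2 / ε) ≤ (N : ℝ) →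
          V zs (z N) ≤ ε :=
  algorithm4_iteration_complexity_general X hXconv d hdconv Dd hd V hV μ Lb hμ hLb g hmono zs hzs
    hMinty z w hzX hwX L hL hLle hwmin hzmin hls
end
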